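/- Let X' be a distribution supported on a set C ⊆ {0,1}^n whose elements are pairwise at relative Hamming distance at least δ > 0, and let Y be any distribution over {0,1}^n whose Hamming earth mover's distance to X' is at most ε'. Let corr: {0,1}^n → C map each string to a closest element of C (in Hamming distance). Then the total variation distance between X' and the pushforward distribution corr(Y) is at most (2/δ)·ε'. -/

import Mathlib

/-!
Fix a coupling `W` of `X'` and `Y`. Both `X'` and `corr(Y)` are marginals of the image of `W`
under `(x, y) ↦ (x, corr y)`, so their TV distance is at most the `W`-mass of the pairs with
`x ≠ corr y`. For such a pair with `x ∈ C`, separation and the choice of `corr y` give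
`δ ≤ Δ(x, corr y) ≤ Δ(x, y) + Δ(y, corr y) ≤ 2 Δ(x, y)`, so that mass is at most `2/δ` times the
cost of `W`. Taking the infimum over `W` bounds `(δ/2) · tv` by the earth mover's distance.
-/

open Finset
open scoped Classical

noncomputable section

/-- A probability distribution on a finite type, given as a mass function. -/
def IsDist {α : Type*} [Fintype α] (P : α → ℝ) : Prop :=
  (∀ x, 0 ≤ P x) ∧ ∑ x, P x = 1

/-- A coupling of two mass functions. -/
def IsCoupling {α : Type*} [Fintype α] (P Q : α → ℝ) (W : α → α → ℝ) : Prop :=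
  (∀ x y, 0 ≤ W x y) ∧ (∀ x, ∑ y, W x y = P x) ∧ (∀ y, ∑ x, W x y = Q y)

/-- Earth mover's distance with respect to a cost function `d`. -/
def emd {α : Type*} [Fintype α] (d : α → α → ℝ) (P Q : α → ℝ) : ℝ :=
  sInf {c : ℝ | ∃ W, IsCoupling P Q W ∧ c = ∑ x, ∑ y, W x y * d x y}

/-- Total variation distance. -/
def tv {α : Type*} [Fintype α] (P Q : α → ℝ) : ℝ :=
  (∑ x, |P x - Q x|) / 2

/-- Relative Hamming distance on `n`-bit strings. -/
def relHamming {n : ℕ} (x y : Fin n → Bool) : ℝ :=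
  (hammingDist x y : ℝ) / n

/-- Support size of a mass function. -/
def suppCard {α : Type*} [Fintype α] (P : α → ℝ) : ℕ :=
  (univ.filter fun x => P x ≠ 0).card

/-- Pushforward of a mass function along a map. -/
def push {α β : Type*} [Fintype α] (f : α → β) (P : α → ℝ) : β → ℝ :=
  fun y => ∑ x ∈ univ.filter (fun x => f x = y), P x

section Coupling

variable {α : Type*} [Fintype α]

theorem sum_abs_boole_sub_boole [DecidableEq α] (a b : α) :
    ∑ z, |(if a = z then (1 : ℝ) else 0) - if b = z then 1 else 0| = if a = b then 0 else 2 := by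
  by_cases hab : a = b
  · simp [hab]
  · have hpoint : ∀ z, |(if a = z then (1 : ℝ) else 0) - if b = z then 1 else 0| =
        (if a = z then 1 else 0) + if b = z then 1 else 0 := by
      intro z
      by_cases ha : a = z <;> by_cases hb : b = z <;> simp_all
    norm_num [hpoint, sum_add_distrib, hab]

variable {P Q : α → ℝ} {W : α → α → ℝ}

theorem isCoupling_mul (hP : IsDist P) (hQ : IsDist Q) : IsCoupling P Q fun x y => P x * Q y :=
  ⟨fun x y => mul_nonneg (hP.1 x) (hQ.1 y), fun x => by rw [← mul_sum, hQ.2, mul_one],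
    fun y => by rw [← sum_mul, hP.2, one_mul]⟩

theorem le_emd_of_forall_isCoupling (d : α → α → ℝ) (hP : IsDist P) (hQ : IsDist Q) {a : ℝ}
    (h : ∀ W, IsCoupling P Q W → a ≤ ∑ x, ∑ y, W x y * d x y) : a ≤ emd d P Q :=
  le_csInf ⟨_, _, isCoupling_mul hP hQ, rfl⟩ fun _ ⟨W, hW, hc⟩ => hc ▸ h W hW

theorem IsCoupling.eq_zero_of_left_eq_zero (hW : IsCoupling P Q W) {x : α} (hx : P x = 0)
    (y : α) : W x y = 0 :=
  (sum_eq_zero_iff_of_nonneg fun y _ => hW.1 x y).mp (by rw [hW.2.1 x, hx]) y (mem_univ y)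

theorem IsCoupling.sub_push_eq [DecidableEq α] (hW : IsCoupling P Q W) (f : α → α) (z : α) :
    P z - push f Q z =
      ∑ x, ∑ y, W x y * ((if x = z then 1 else 0) - if f y = z then 1 else 0) := by
  have hP : P z = ∑ x, ∑ y, W x y * if x = z then 1 else 0 := by
    simp [hW.2.1]
  have hQ : push f Q z = ∑ x, ∑ y, W x y * if f y = z then 1 else 0 := by
    rw [sum_comm, push, sum_filter]
    refine sum_congr rfl fun y _ => ?_
    rw [← sum_mul, hW.2.2 y, mul_boole]
    -- `push` filters with the classical decidability instance
    congr
  simp only [mul_sub, sum_sub_distrib, hP, hQ]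

theorem IsCoupling.tv_push_le [DecidableEq α] (hW : IsCoupling P Q W) (f : α → α) :
    tv P (push f Q) ≤ ∑ x, ∑ y, if x = f y then 0 else W x y := by
  calc tv P (push f Q)
      ≤ (∑ z, ∑ x, ∑ y, W x y * |(if x = z then 1 else 0) - if f y = z then 1 else 0|) / 2 := by
        rw [tv]
        gcongr with z
        rw [hW.sub_push_eq f z]
        refine (abs_sum_le_sum_abs _ _).trans (sum_le_sum fun x _ => ?_)
        refine (abs_sum_le_sum_abs _ _).trans_eq (sum_congr rfl fun y _ => ?_)
        rw [abs_mul, abs_of_nonneg (hW.1 x y)]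
    _ = ∑ x, ∑ y, if x = f y then 0 else W x y := by
        rw [sum_comm, sum_div]
        refine sum_congr rfl fun x _ => ?_
        rw [sum_comm, sum_div]
        refine sum_congr rfl fun y _ => ?_
        rw [← mul_sum, sum_abs_boole_sub_boole]
        split_ifs <;> ring

end Coupling

section Correction

variable {n : ℕ}

theorem relHamming_nonneg (x y : Fin n → Bool) : 0 ≤ relHamming x y := by
  unfold relHamming; positivity

theorem relHamming_comm (x y : Fin n → Bool) : relHamming x y = relHamming y x := by
  rw [relHamming, relHamming, hammingDist_comm]

theorem relHamming_triangle (x y z : Fin n → Bool) :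
    relHamming x z ≤ relHamming x y + relHamming y z := by
  rw [relHamming, relHamming, relHamming, ← add_div]
  exact div_le_div_of_nonneg_right (mod_cast hammingDist_triangle x y z) n.cast_nonneg

variable {δ : ℝ} {C : Finset (Fin n → Bool)} {corr : (Fin n → Bool) → Fin n → Bool}

theorem half_le_relHamming_of_ne_corr
    (hsep : ∀ x ∈ C, ∀ y ∈ C, x ≠ y → δ ≤ relHamming x y) (hcorrC : ∀ y, corr y ∈ C)
    (hcorrMin : ∀ y, ∀ c ∈ C, relHamming y (corr y) ≤ relHamming y c)
    {x y : Fin n → Bool} (hx : x ∈ C) (hne : x ≠ corr y) : δ / 2 ≤ relHamming x y := by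
  have hfar : δ ≤ relHamming x (corr y) := hsep x hx (corr y) (hcorrC y) hne
  have hnear : relHamming y (corr y) ≤ relHamming x y := relHamming_comm x y ▸ hcorrMin y x hx
  linarith [relHamming_triangle x y (corr y)]

theorem IsCoupling.half_mul_tv_push_corr_le_cost {P Q : (Fin n → Bool) → ℝ}
    {W : (Fin n → Bool) → (Fin n → Bool) → ℝ} (hW : IsCoupling P Q W) (hδ : 0 ≤ δ)
    (hsep : ∀ x ∈ C, ∀ y ∈ C, x ≠ y → δ ≤ relHamming x y) (hcorrC : ∀ y, corr y ∈ C)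
    (hcorrMin : ∀ y, ∀ c ∈ C, relHamming y (corr y) ≤ relHamming y c)
    (hsupp : ∀ x, P x ≠ 0 → x ∈ C) :
    δ / 2 * tv P (push corr Q) ≤ ∑ x, ∑ y, W x y * relHamming x y := by
  calc δ / 2 * tv P (push corr Q)
      ≤ δ / 2 * ∑ x, ∑ y, if x = corr y then 0 else W x y := by
        gcongr; exact hW.tv_push_le corr
    _ = ∑ x, ∑ y, δ / 2 * if x = corr y then 0 else W x y := by simp only [mul_sum]
    _ ≤ ∑ x, ∑ y, W x y * relHamming x y := sum_le_sum fun x _ => sum_le_sum fun y _ => ?_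
  split_ifs with hne
  · exact (mul_zero _).trans_le (mul_nonneg (hW.1 x y) (relHamming_nonneg x y))
  by_cases hx : P x = 0
  · simp [hW.eq_zero_of_left_eq_zero hx]
  rw [mul_comm]
  exact mul_le_mul_of_nonneg_left
    (half_le_relHamming_of_ne_corr hsep hcorrC hcorrMin (hsupp x hx) hne) (hW.1 x y)

end Correction

theorem tv_corr_le_general {n : ℕ} (δ ε' : ℝ) (hδ : 0 < δ)
    (C : Finset (Fin n → Bool))
    (hsep : ∀ x ∈ C, ∀ y ∈ C, x ≠ y → δ ≤ relHamming x y)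
    (X' Y : (Fin n → Bool) → ℝ) (hX' : IsDist X') (hY : IsDist Y)
    (hsupp : ∀ x, X' x ≠ 0 → x ∈ C)
    (corr : (Fin n → Bool) → (Fin n → Bool))
    (hcorrC : ∀ y, corr y ∈ C)
    (hcorrMin : ∀ y, ∀ c ∈ C, relHamming y (corr y) ≤ relHamming y c)
    (hclose : emd relHamming X' Y ≤ ε') :
    tv X' (push corr Y) ≤ (2 / δ) * ε' := by
  have hemd : δ / 2 * tv X' (push corr Y) ≤ emd relHamming X' Y :=
    le_emd_of_forall_isCoupling relHamming hX' hY fun _ hW =>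
      hW.half_mul_tv_push_corr_le_cost hδ.le hsep hcorrC hcorrMin hsupp
  calc tv X' (push corr Y) = 2 / δ * (δ / 2 * tv X' (push corr Y)) := by field_simp
    _ ≤ 2 / δ * ε' := by gcongr; exact hemd.trans hclose

/-- correcting `Y` to the nearest element of a δ-separated set `C` supporting `X'`
yields a distribution at TV-distance at most `(2/δ)·ε'` from `X'`, where `ε'` bounds the
Hamming EMD between `X'` and `Y`. -/
theorem tv_corr_le {n : ℕ} (hn : 0 < n) (δ ε' : ℝ) (hδ : 0 < δ)
    (C : Finset (Fin n → Bool))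
    (hsep : ∀ x ∈ C, ∀ y ∈ C, x ≠ y → δ ≤ relHamming x y)
    (X' Y : (Fin n → Bool) → ℝ) (hX' : IsDist X') (hY : IsDist Y)
    (hsupp : ∀ x, X' x ≠ 0 → x ∈ C)
    (corr : (Fin n → Bool) → (Fin n → Bool))
    (hcorrC : ∀ y, corr y ∈ C)
    (hcorrMin : ∀ y, ∀ c ∈ C, relHamming y (corr y) ≤ relHamming y c)
    (hclose : emd relHamming X' Y ≤ ε') :
    tv X' (push corr Y) ≤ (2 / δ) * ε' :=
  tv_corr_le_general δ ε' hδ C hsep X' Y hX' hY hsupp corr hcorrC hcorrMin hclose
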